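/- arXiv:2407.20722 — 2 statements merged into one kernel-verified Lean document; each statement's English description precedes it below -/
import Mathlib

section
/- With the same setup, if $\theta\sim p_{t'}$ for any fixed $t'\in\{1,\dots,t-1\}$, then $\mathbb{E}_{p_{t'}}[\bar w_t(\theta)]$ need not equal $\mathcal{Z}_t$ in general, but the average over $t'$ does: $\frac{1}{t-1}\sum_{t'=1}^{t-1}\mathbb{E}_{p_{t'}}[\bar w_t(\theta)]=\mathcal{Z}_t$. -/
open MeasureTheory Finset

/-- Although for a fixed past iteration `t'` the expectation of the persistent weight under
`p_{t'}` need not equal `Z_t`, the average over all previous iterations does: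
`(1/(t-1)) ∑_{t'} E_{p_{t'}}[w̄_t] = Z_t`. -/
theorem persistent_weight_average_expectation
    {Θ : Type*} [MeasurableSpace Θ] (ν : Measure Θ)
    (prior L : Θ → ℝ) (β : ℕ → ℝ) (Z : ℕ → ℝ) (t : ℕ) (ht : 2 ≤ t)
    (hprior_nonneg : ∀ θ, 0 ≤ prior θ) (hprior_prob : ∫ θ, prior θ ∂ν = 1)
    (hL_pos : ∀ θ, 0 < L θ) (hL_meas : Measurable L)
    (hβ1 : β 1 = 0) (hβ_mono : ∀ s s', 1 ≤ s → s < s' → s' ≤ t → β s < β s')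
    (hZ : ∀ s, s ≤ t → ∫ θ, L θ ^ β s * prior θ ∂ν = Z s)
    (hZ_pos : ∀ s, s ≤ t → 0 < Z s)
    (hint : ∀ s, s ≤ t → Integrable (fun θ => L θ ^ β s * prior θ) ν) :
    (1 / (t - 1 : ℝ)) * ∑ t' ∈ Icc 1 (t - 1),
        (∫ θ, (L θ ^ β t / ((1 / (t - 1 : ℝ)) * ∑ s ∈ Icc 1 (t - 1), L θ ^ β s / Z s)) *
            (L θ ^ β t' * prior θ / Z t') ∂ν)
      = Z t := by
  have ht2 : (2:ℝ) ≤ (t:ℝ) := by exact_mod_cast ht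
  have htpos : (0:ℝ) < (t:ℝ) - 1 := by linarith
  have htne : ((t:ℝ) - 1) ≠ 0 := ne_of_gt htpos
  set S : Θ → ℝ := fun θ => ∑ s ∈ Icc 1 (t-1), L θ ^ β s / Z s with hSdef
  have hSpos : ∀ θ, 0 < S θ := by
    intro θ
    apply Finset.sum_pos
    · intro s hs
      simp only [mem_Icc] at hs
      exact div_pos (Real.rpow_pos_of_pos (hL_pos θ) _) (hZ_pos s (by omega))
    · exact ⟨1, by simp only [mem_Icc]; omega⟩
  have hterm_le : ∀ t' ∈ Icc 1 (t-1), ∀ θ, L θ ^ β t' / Z t' ≤ S θ := by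
    intro t' ht' θ
    apply Finset.single_le_sum (f := fun s => L θ ^ β s / Z s) _ ht'
    intro s hs
    simp only [mem_Icc] at hs
    exact le_of_lt (div_pos (Real.rpow_pos_of_pos (hL_pos θ) _) (hZ_pos s (by omega)))
  have hint' : ∀ t' ∈ Icc 1 (t-1),
      Integrable (fun θ => (L θ ^ β t / ((1 / ((t:ℝ) - 1)) * S θ)) *
        (L θ ^ β t' * prior θ / Z t')) ν := by
    intro t' ht'
    have ht'le : t' ≤ t := by simp only [mem_Icc] at ht'; omega
    have hZt' := hZ_pos t' ht'le
    have hmeas : AEStronglyMeasurable (fun θ => (L θ ^ β t / ((1 / ((t:ℝ) - 1)) * S θ)) *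
        (L θ ^ β t' * prior θ / Z t')) ν := by
      have h1 : Measurable (fun θ => L θ ^ β t / ((1 / ((t:ℝ) - 1)) * S θ) / Z t') := by
        fun_prop
      have h2 : AEStronglyMeasurable (fun θ =>
          (L θ ^ β t / ((1 / ((t:ℝ) - 1)) * S θ) / Z t') * (L θ ^ β t' * prior θ)) ν :=
        h1.aestronglyMeasurable.mul (hint t' ht'le).aestronglyMeasurable
      refine h2.congr (Filter.Eventually.of_forall fun θ => ?_)
      ring
    refine ((hint t le_rfl).const_mul ((t:ℝ) - 1)).mono' hmeas
      (Filter.Eventually.of_forall fun θ => ?_)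
    have hnn : 0 ≤ (L θ ^ β t / ((1 / ((t:ℝ) - 1)) * S θ)) * (L θ ^ β t' * prior θ / Z t') := by
      apply mul_nonneg
      · exact div_nonneg (le_of_lt (Real.rpow_pos_of_pos (hL_pos θ) _))
          (mul_nonneg (by positivity) (le_of_lt (hSpos θ)))
      · exact div_nonneg (mul_nonneg (le_of_lt (Real.rpow_pos_of_pos (hL_pos θ) _))
          (hprior_nonneg θ)) hZt'.le
    rw [Real.norm_eq_abs, abs_of_nonneg hnn]
    have key : (L θ ^ β t / ((1 / ((t:ℝ) - 1)) * S θ)) * (L θ ^ β t' * prior θ / Z t')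
        = (((t:ℝ) - 1) * (L θ ^ β t * prior θ)) * ((L θ ^ β t' / Z t') / S θ) := by
      field_simp
    rw [key]
    have hle1 : (L θ ^ β t' / Z t') / S θ ≤ 1 :=
      (div_le_one (hSpos θ)).mpr (hterm_le t' ht' θ)
    calc (((t:ℝ) - 1) * (L θ ^ β t * prior θ)) * ((L θ ^ β t' / Z t') / S θ)
        ≤ (((t:ℝ) - 1) * (L θ ^ β t * prior θ)) * 1 := by
          apply mul_le_mul_of_nonneg_left hle1
          exact mul_nonneg htpos.le (mul_nonneg
            (le_of_lt (Real.rpow_pos_of_pos (hL_pos θ) _)) (hprior_nonneg θ))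
      _ = ((t:ℝ) - 1) * (L θ ^ β t * prior θ) := mul_one _
  rw [← integral_finset_sum _ hint']
  have hpt : ∀ θ, (∑ t' ∈ Icc 1 (t-1), (L θ ^ β t / ((1 / ((t:ℝ) - 1)) * S θ)) *
      (L θ ^ β t' * prior θ / Z t'))
      = ((t:ℝ) - 1) * (L θ ^ β t * prior θ) := by
    intro θ
    have : ∀ t' ∈ Icc 1 (t-1), (L θ ^ β t / ((1 / ((t:ℝ) - 1)) * S θ)) *
        (L θ ^ β t' * prior θ / Z t')
        = (L θ ^ β t / ((1 / ((t:ℝ) - 1)) * S θ) * prior θ) * (L θ ^ β t' / Z t') := by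
      intro t' _
      ring
    rw [Finset.sum_congr rfl this, ← Finset.mul_sum]
    have hfold : (∑ i ∈ Icc 1 (t-1), L θ ^ β i / Z i) = S θ := rfl
    rw [hfold]
    have hSne := ne_of_gt (hSpos θ)
    field_simp
  rw [integral_congr_ae (Filter.Eventually.of_forall hpt), integral_const_mul,
    hZ t le_rfl]
  field_simp
end

section
/- Let $Z$ be a random variable with $\mathbb{E}[Z]=z>0$, $\mathrm{Var}(Z)=\sigma^2/N$, and $z/2\le Z\le 2z$ almost surely. Then $\left|\mathbb{E}[1/Z]-\frac{1}{z}-\frac{\sigma^2}{Nz^3}\right|\le \frac{2\,\mathbb{E}|Z-z|^3}{z^4}$. -/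
open MeasureTheory

/-- Bias of the reciprocal of an unbiased estimator: if `E[Z] = z`, `Var(Z) = σ²/N` and
`z/2 ≤ Z ≤ 2z` a.s., then `|E[1/Z] - 1/z - σ²/(N z³)| ≤ 2 E|Z-z|³ / z⁴`. -/
theorem reciprocal_bias_magnitude
    {Ω : Type*} [MeasurableSpace Ω] (μ : Measure Ω) [IsProbabilityMeasure μ]
    (Z : Ω → ℝ) (z σ2 : ℝ) (N : ℕ) (hN : 0 < N)
    (hZ_meas : Measurable Z) (hz : 0 < z)
    (hZ_bdd : ∀ᵐ ω ∂μ, z / 2 ≤ Z ω ∧ Z ω ≤ 2 * z)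
    (hint : Integrable Z μ) (hmean : ∫ ω, Z ω ∂μ = z)
    (hvar : ∫ ω, (Z ω - z) ^ 2 ∂μ = σ2 / N) :
    |(∫ ω, 1 / Z ω ∂μ) - 1 / z - σ2 / (N * z ^ 3)|
      ≤ 2 * (∫ ω, |Z ω - z| ^ 3 ∂μ) / z ^ 4 := by
  have hzne : z ≠ 0 := ne_of_gt hz
  have hN' : (0:ℝ) < (N:ℝ) := by exact_mod_cast hN
  -- integrability facts
  have hinv_meas : Measurable fun ω => 1 / Z ω := by
    simp only [one_div]; exact hZ_meas.inv
  have hinv_int : Integrable (fun ω => 1 / Z ω) μ := by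
    refine Integrable.mono' (integrable_const (2 / z)) hinv_meas.aestronglyMeasurable ?_
    filter_upwards [hZ_bdd] with ω hω
    have h1 : 0 < Z ω := lt_of_lt_of_le (by linarith) hω.1
    rw [Real.norm_eq_abs, abs_of_pos (by positivity)]
    rw [div_le_div_iff₀ h1 hz]
    nlinarith [hω.1]
  have hsq_int : Integrable (fun ω => (Z ω - z) ^ 2) μ := by
    refine Integrable.mono' (integrable_const (z ^ 2)) ?_ ?_
    · exact ((hZ_meas.sub measurable_const).pow measurable_const).aestronglyMeasurable
    · filter_upwards [hZ_bdd] with ω hω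
      rw [Real.norm_eq_abs, abs_of_nonneg (sq_nonneg _)]
      nlinarith [hω.1, hω.2]
  have hcube_int : Integrable (fun ω => |Z ω - z| ^ 3) μ := by
    refine Integrable.mono' (integrable_const (z ^ 3)) ?_ ?_
    · exact (((hZ_meas.sub measurable_const).abs).pow measurable_const).aestronglyMeasurable
    · filter_upwards [hZ_bdd] with ω hω
      have habs : |Z ω - z| ≤ z := by
        rw [abs_le]; constructor <;> linarith [hω.1, hω.2]
      rw [Real.norm_eq_abs, abs_of_nonneg (by positivity)]
      calc |Z ω - z| ^ 3 ≤ z ^ 3 := by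
            exact pow_le_pow_left₀ (abs_nonneg _) habs 3
        _ = z ^ 3 := rfl
  set g : Ω → ℝ := fun ω => 1 / Z ω - 1 / z + (Z ω - z) / z ^ 2 - (Z ω - z) ^ 2 / z ^ 3
    with hg
  have hg_int : Integrable g μ := by
    apply Integrable.sub
    apply Integrable.add
    apply Integrable.sub hinv_int (integrable_const _)
    · exact (hint.sub (integrable_const z)).div_const _
    · exact hsq_int.div_const _
  -- value of ∫ g
  have hg_val : ∫ ω, g ω ∂μ = (∫ ω, 1 / Z ω ∂μ) - 1 / z - σ2 / (N * z ^ 3) := by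
    have h1 : ∫ ω, (Z ω - z) / z ^ 2 ∂μ = 0 := by
      rw [integral_div, integral_sub hint (integrable_const z)]
      simp [hmean]
    have h2 : ∫ ω, (Z ω - z) ^ 2 / z ^ 3 ∂μ = σ2 / (N * z ^ 3) := by
      rw [integral_div, hvar, div_div]
    have iInv : Integrable (fun ω => 1 / Z ω - 1 / z) μ := hinv_int.sub (integrable_const _)
    have iA : Integrable (fun ω => (Z ω - z) / z ^ 2) μ :=
      (hint.sub (integrable_const z)).div_const _
    have iB : Integrable (fun ω => (Z ω - z) ^ 2 / z ^ 3) μ := hsq_int.div_const _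
    have iC : Integrable (fun ω => 1 / Z ω - 1 / z + (Z ω - z) / z ^ 2) μ := iInv.add iA
    rw [hg]
    rw [integral_sub iC iB, integral_add iInv iA,
      integral_sub hinv_int (integrable_const _), h1, h2]
    simp
  -- pointwise bound on |g|
  have hg_bd : ∀ᵐ ω ∂μ, |g ω| ≤ 2 * |Z ω - z| ^ 3 / z ^ 4 := by
    filter_upwards [hZ_bdd] with ω hω
    have h1 : 0 < Z ω := lt_of_lt_of_le (by linarith) hω.1
    have hZne : Z ω ≠ 0 := ne_of_gt h1
    have hid : g ω = -((Z ω - z) ^ 3 / (z ^ 3 * Z ω)) := by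
      rw [hg]; field_simp; ring
    rw [hid, abs_neg, abs_div, abs_of_pos (by positivity : (0:ℝ) < z ^ 3 * Z ω)]
    rw [div_le_div_iff₀ (by positivity) (by positivity)]
    have h3 : |(Z ω - z) ^ 3| = |Z ω - z| ^ 3 := by
      rw [abs_pow]
    rw [h3]
    have hc : |Z ω - z| ^ 3 * z ^ 4 ≤ |Z ω - z| ^ 3 * (z ^ 3 * (2 * Z ω)) := by
      apply mul_le_mul_of_nonneg_left _ (by positivity)
      nlinarith [hω.1, pow_pos hz 3]
    nlinarith [hc]
  -- conclude
  rw [← hg_val]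
  calc |∫ ω, g ω ∂μ| ≤ ∫ ω, |g ω| ∂μ := by simpa [Real.norm_eq_abs] using norm_integral_le_integral_norm (fun ω => g ω) (μ := μ)
    _ ≤ ∫ ω, 2 * |Z ω - z| ^ 3 / z ^ 4 ∂μ := by
        refine integral_mono_ae hg_int.abs ?_ hg_bd
        simpa [mul_div_assoc] using (hcube_int.div_const (z ^ 4)).const_mul 2
    _ = 2 * (∫ ω, |Z ω - z| ^ 3 ∂μ) / z ^ 4 := by
        simp_rw [mul_div_assoc]
        rw [integral_const_mul, integral_div]
end
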